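/- Let Ω ⊆ ℝⁿ be a locally closed and unbounded set. Then the normal cone to Ω at infinity decomposes as the union of directional normal cones at infinity over unit asymptotic directions: N_Ω(∞) = ⋃_{u ∈ Ω^∞ ∩ 𝕊} N_Ω(∞; u). -/

import Mathlib

open Filter Topology Set
open scoped RealInnerProductSpace Pointwise

noncomputable section

/-- `ℝⁿ` with the Euclidean structure. -/
abbrev Eu (n : ℕ) := EuclideanSpace ℝ (Fin n)

/-- The Fréchet (regular) normal cone to `Ω ⊆ ℝⁿ` at `xc` (empty when `xc ∉ Ω`):
`v` belongs to it iff `limsup_{x → xc, x ∈ Ω} ⟪v, x - xc⟫ / ‖x - xc‖ ≤ 0`. -/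
def frechetNC {n : ℕ} (Ω : Set (Eu n)) (xc : Eu n) : Set (Eu n) :=
  {v | xc ∈ Ω ∧ ∀ ε > 0, ∃ δ > 0, ∀ x ∈ Ω, ‖x - xc‖ < δ →
        ⟪v, x - xc⟫ ≤ ε * ‖x - xc‖}

/-- `x_k →ᵘ ∞` : `‖x_k‖ → ∞` and `x_k / ‖x_k‖ → u`. -/
def TendstoDirInfty {n : ℕ} (x : ℕ → Eu n) (u : Eu n) : Prop :=
  Tendsto (fun k => ‖x k‖) atTop atTop ∧
  Tendsto (fun k => ‖x k‖⁻¹ • x k) atTop (𝓝 u)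

/-- The asymptotic cone of `D`: all `u` such that `x_k / t_k → u` for some
`t_k → +∞` and `x_k ∈ D`. -/
def asymptoticConeEu {n : ℕ} (D : Set (Eu n)) : Set (Eu n) :=
  {u | ∃ (t : ℕ → ℝ) (x : ℕ → Eu n), Tendsto t atTop atTop ∧ (∀ k, x k ∈ D) ∧
      Tendsto (fun k => (t k)⁻¹ • x k) atTop (𝓝 u)}

/-- The normal cone to `Ω` in direction `u` at infinity:
limits of Fréchet normals along sequences `x_k →^{Ω,u} ∞`. -/
def dirNCInfty {n : ℕ} (Ω : Set (Eu n)) (u : Eu n) : Set (Eu n) :=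
  {ξ | ∃ (x w : ℕ → Eu n), (∀ k, x k ∈ Ω) ∧ TendstoDirInfty x u ∧
      (∀ k, w k ∈ frechetNC Ω (x k)) ∧ Tendsto w atTop (𝓝 ξ)}

/-- The normal cone to `Ω` at infinity. -/
def NCInfty {n : ℕ} (Ω : Set (Eu n)) : Set (Eu n) :=
  {ξ | ∃ (x w : ℕ → Eu n), (∀ k, x k ∈ Ω) ∧ Tendsto (fun k => ‖x k‖) atTop atTop ∧
      (∀ k, w k ∈ frechetNC Ω (x k)) ∧ Tendsto w atTop (𝓝 ξ)}

/-- For a locally closed unbounded `Ω ⊆ ℝⁿ`,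
`N_Ω(∞) = ⋃_{u ∈ Ω^∞ ∩ 𝕊} N_Ω(∞; u)`. -/
theorem ncInfty_eq_iUnion_dirNCInfty {n : ℕ} (Ω : Set (Eu n))
    (hloc : ∀ x ∈ Ω, ∃ U ∈ 𝓝 x, IsClosed (Ω ∩ U))
    (hunb : ¬ Bornology.IsBounded Ω) :
    NCInfty Ω = ⋃ (u : Eu n) (_ : u ∈ asymptoticConeEu Ω ∧ ‖u‖ = 1), dirNCInfty Ω u := by
  ext ξ
  simp only [mem_iUnion]
  constructor
  · rintro ⟨x, w, hx, hnorm, hw, hwlim⟩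
    obtain ⟨N, hN⟩ := (tendsto_atTop.mp hnorm 1).exists_forall_of_atTop
    set x' : ℕ → Eu n := fun k => x (k + N) with hx'def
    set w' : ℕ → Eu n := fun k => w (k + N) with hw'def
    have hx'norm : ∀ k, 1 ≤ ‖x' k‖ := fun k => hN _ (Nat.le_add_left N k)
    have hx'ne : ∀ k, ‖x' k‖ ≠ 0 := fun k => by
      have := hx'norm k; positivity
    have hf : ∀ k, (‖x' k‖⁻¹ • x' k) ∈ Metric.sphere (0 : Eu n) 1 := by
      intro k
      rw [mem_sphere_zero_iff_norm, norm_smul, norm_inv, norm_norm,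
        inv_mul_cancel₀ (hx'ne k)]
    obtain ⟨u, hu, φ, hφ, hconv⟩ :=
      (isCompact_sphere (0 : Eu n) 1).tendsto_subseq hf
    have hshift : Tendsto (fun k => k + N) atTop atTop := tendsto_add_atTop_nat N
    have hx'tend : Tendsto (fun k => ‖x' k‖) atTop atTop := hnorm.comp hshift
    have hφtend : Tendsto φ atTop atTop := hφ.tendsto_atTop
    refine ⟨u, ⟨⟨fun k => ‖x' (φ k)‖, fun k => x' (φ k),
        hx'tend.comp hφtend, fun k => hx _, hconv⟩,
        mem_sphere_zero_iff_norm.mp hu⟩,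
      fun k => x' (φ k), fun k => w' (φ k), fun k => hx _,
      ⟨hx'tend.comp hφtend, hconv⟩, fun k => hw _,
      (hwlim.comp hshift).comp hφtend⟩
  · rintro ⟨u, ⟨-, -⟩, x, w, hx, ⟨hn, -⟩, hw, hwl⟩
    exact ⟨x, w, hx, hn, hw, hwl⟩
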